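/- Let T_1 and T_2 be bounded linear operators on a complex Hilbert space H. Then ‖T_1 + T_2‖² ≤ ω( (3/2)(T_1* T_1 + T_2* T_2) + T_1* T_2 ). -/

import Mathlib

open ContinuousLinearMap

/-- The numerical radius of a bounded linear operator on a complex Hilbert space:
`ω(T) = sup_{‖x‖ = 1} |⟨Tx, x⟩|`. -/
noncomputable def numRadius {H : Type*} [NormedAddCommGroup H] [InnerProductSpace ℂ H]
    (T : H →L[ℂ] H) : ℝ :=
  ⨆ x : {x : H // ‖x‖ = 1}, ‖(inner ℂ (T x) (x : H) : ℂ)‖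

/-!
For a unit vector `x`, put `a = T₁ x`, `b = T₂ x` and let `S` be the operator inside `ω`.
Then `⟨Sx, x⟩ = (3/2)(‖a‖² + ‖b‖²) + ⟨b, a⟩`, while
`‖a + b‖² = ‖a‖² + ‖b‖² + 2 Re⟨b, a⟩ ≤ (3/2)(‖a‖² + ‖b‖²) + Re⟨b, a⟩`
because `Re⟨b, a⟩ ≤ ‖a‖‖b‖ ≤ (‖a‖² + ‖b‖²)/2`. Hence `‖(T₁ + T₂)x‖² ≤ Re⟨Sx, x⟩ ≤ ω(S)`,
and taking the supremum over unit vectors gives the claim.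
-/

section InnerProductSpace

variable {𝕜 E : Type*} [RCLike 𝕜] [NormedAddCommGroup E] [InnerProductSpace 𝕜 E]

open RCLike in
theorem norm_add_sq_le_three_halves_add_re_inner (a b : E) :
    ‖a + b‖ ^ 2 ≤ 3 / 2 * (‖a‖ ^ 2 + ‖b‖ ^ 2) + re (inner 𝕜 a b) := by
  have hab : re (inner 𝕜 a b) ≤ ‖a‖ * ‖b‖ := re_inner_le_norm a b
  rw [norm_add_sq (𝕜 := 𝕜)]
  nlinarith [sq_nonneg (‖a‖ - ‖b‖)]

end InnerProductSpace

theorem ContinuousLinearMap.norm_sq_le_of_unit_norm_sq {𝕜 E F : Type*} [RCLike 𝕜]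
    [NormedAddCommGroup E] [NormedSpace 𝕜 E] [NormedAddCommGroup F] [NormedSpace 𝕜 F]
    {f : E →L[𝕜] F} {C : ℝ} (hC : 0 ≤ C) (hf : ∀ x, ‖x‖ = 1 → ‖f x‖ ^ 2 ≤ C) :
    ‖f‖ ^ 2 ≤ C := by
  have hnorm : ‖f‖ ≤ √C :=
    opNorm_le_of_unit_norm (Real.sqrt_nonneg C) fun x hx ↦
      Real.le_sqrt_of_sq_le (hf x hx)
  calc ‖f‖ ^ 2 ≤ √C ^ 2 := by gcongr
    _ = C := Real.sq_sqrt hC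

section NumRadius

variable {H : Type*} [NormedAddCommGroup H] [InnerProductSpace ℂ H]

theorem numRadius_nonneg (T : H →L[ℂ] H) : 0 ≤ numRadius T :=
  Real.iSup_nonneg fun _ ↦ norm_nonneg _

theorem norm_inner_self_le_numRadius (T : H →L[ℂ] H) {x : H} (hx : ‖x‖ = 1) :
    ‖inner ℂ (T x) x‖ ≤ numRadius T := by
  have hbdd : BddAbove (Set.range fun x : {x : H // ‖x‖ = 1} ↦ ‖inner ℂ (T x) (x : H)‖) := by
    refine ⟨‖T‖, ?_⟩
    rintro _ ⟨⟨y, hy⟩, rfl⟩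
    simpa [hy] using norm_inner_le_norm (𝕜 := ℂ) (T y) y |>.trans
      (mul_le_mul_of_nonneg_right (T.le_opNorm y) (norm_nonneg y))
  exact le_ciSup hbdd ⟨x, hx⟩

theorem re_inner_self_le_numRadius (T : H →L[ℂ] H) {x : H} (hx : ‖x‖ = 1) :
    (inner ℂ (T x) x).re ≤ numRadius T :=
  (Complex.re_le_norm _).trans (norm_inner_self_le_numRadius T hx)

variable [CompleteSpace H]

theorem re_inner_three_halves_apply_self (T₁ T₂ : H →L[ℂ] H) (x : H) :
    (inner ℂ ((((3 : ℂ) / 2) • (adjoint T₁ ∘L T₁ + adjoint T₂ ∘L T₂) +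
        adjoint T₁ ∘L T₂) x) x).re =
      3 / 2 * (‖T₁ x‖ ^ 2 + ‖T₂ x‖ ^ 2) + (inner ℂ (T₂ x) (T₁ x)).re := by
  simp only [add_apply, smul_apply, comp_apply, inner_add_left, inner_smul_left,
    adjoint_inner_left, inner_self_eq_norm_sq_to_K, Complex.add_re]
  norm_num [← Complex.ofReal_pow, map_ofNat]

end NumRadius

theorem norm_sq_add_le_numRadius_three_halves
    {H : Type*} [NormedAddCommGroup H] [InnerProductSpace ℂ H] [CompleteSpace H]
    (T₁ T₂ : H →L[ℂ] H) :
    ‖T₁ + T₂‖ ^ 2 ≤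
      numRadius (((3 : ℂ) / 2) • (adjoint T₁ ∘L T₁ + adjoint T₂ ∘L T₂) +
        adjoint T₁ ∘L T₂) := by
  refine norm_sq_le_of_unit_norm_sq (numRadius_nonneg _) fun x hx ↦ ?_
  calc ‖(T₁ + T₂) x‖ ^ 2 = ‖T₂ x + T₁ x‖ ^ 2 := by rw [add_apply, add_comm]
    _ ≤ 3 / 2 * (‖T₂ x‖ ^ 2 + ‖T₁ x‖ ^ 2) + (inner ℂ (T₂ x) (T₁ x)).re :=
      norm_add_sq_le_three_halves_add_re_inner (𝕜 := ℂ) _ _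
    _ = _ := by rw [add_comm (‖T₂ x‖ ^ 2), re_inner_three_halves_apply_self]
    _ ≤ _ := re_inner_self_le_numRadius _ hx
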